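/- arXiv:1408.1863 — 2 statements merged into one kernel-verified Lean document; each statement's English description precedes it below -/
import Mathlib

section
/- Let d ≥ 2, let B be a nonnegative measurable collision kernel, and let f : ℝ^d → [0,∞) be measurable. Assume that the function (v, v_*, σ) ↦ B(cos θ, |v−v_*|) f(v) f(v_*) is integrable on ℝ^d × ℝ^d × S^{d−1} (which, by the pre–post-collisional change of variables, makes the gain term integrable as well). Then the collision operator conserves mass: ∫_{ℝ^d} Q(f,f)(v) dv = 0. -/
open MeasureTheory Metric Real
open scoped InnerProductSpace

noncomputable section

/-- Velocity space ℝ^d. -/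
abbrev Vel (d : ℕ) := EuclideanSpace ℝ (Fin d)

/-- Surface measure on the unit sphere of ℝ^d. -/
def sphereMeasure (d : ℕ) : Measure (sphere (0 : Vel d) 1) :=
  (volume : Measure (Vel d)).toSphere

/-- The Boltzmann bilinear collision operator on ℝ^d, with collision kernel
`B = B(cos θ, |v−v_*|)`. -/
def collOp (d : ℕ) (B : ℝ → ℝ → ℝ) (f g : Vel d → ℝ) (v : Vel d) : ℝ :=
  ∫ vs : Vel d, ∫ σ : sphere (0 : Vel d) 1,
    B (⟪(σ : Vel d), v - vs⟫_ℝ / ‖v - vs‖) ‖v - vs‖ *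
      (f ((2 : ℝ)⁻¹ • (v + vs) - (‖v - vs‖ / 2) • (σ : Vel d)) *
         g ((2 : ℝ)⁻¹ • (v + vs) + (‖v - vs‖ / 2) • (σ : Vel d))
        - f vs * g v)
    ∂(sphereMeasure d) ∂volume

/-!
In the variables `m = (v + v_*)/2`, `q = v - v_*` (a measure-preserving linear change)
the loss integrand is `K(m, q, σ)` and the gain integrand is `K(m, |q|σ, q/|q|)` for one
function `K`. Writing `q = r ω` in polar coordinates, `(r ω, σ) ↦ (r σ, ω)` merely exchanges
the two factors `ω, σ` of `S^{d-1}`, so it preserves `dq dσ`. Hence gain and loss are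
equimeasurable: the gain term is integrable with the same integral as the loss term, and
Fubini gives `∫ Q(f,f) = 0`.
-/

instance (d : ℕ) : IsFiniteMeasure (sphereMeasure d) := by
  unfold sphereMeasure; infer_instance

section ChangeOfVariables

variable {E : Type*} [NormedAddCommGroup E] [NormedSpace ℝ E] [MeasurableSpace E] [BorelSpace E]

theorem measurePreserving_midpoint_sub [SecondCountableTopology E] (μ : Measure E)
    [μ.IsAddRightInvariant] [SFinite μ] :
    MeasurePreserving (fun p : E × E => ((2 : ℝ)⁻¹ • (p.1 + p.2), p.1 - p.2))
      (μ.prod μ) (μ.prod μ) := by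
  have shear : MeasurePreserving (fun p : E × E => (p.1, p.2 + (2 : ℝ)⁻¹ • p.1))
      (μ.prod μ) (μ.prod μ) :=
    (MeasurePreserving.id μ).skew_product (by fun_prop)
      (.of_forall fun x => map_add_right_eq_self μ ((2 : ℝ)⁻¹ • x))
  convert Measure.measurePreserving_swap.comp (shear.comp (measurePreserving_sub_prod μ μ))
    using 2 with p
  ext <;> simp only [Function.comp_apply, Prod.swap_prod_mk]
  module

theorem measurePreserving_midpoint_sub_prod [SecondCountableTopology E] {γ : Type*}
    [MeasurableSpace γ] (μ : Measure E) [μ.IsAddRightInvariant] [SFinite μ]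
    (ν : Measure γ) [SFinite ν] :
    MeasurePreserving (fun p : E × E × γ => ((2 : ℝ)⁻¹ • (p.1 + p.2.1), p.1 - p.2.1, p.2.2))
      (μ.prod (μ.prod ν)) (μ.prod (μ.prod ν)) := by
  have assoc := measurePreserving_prodAssoc μ μ ν
  exact assoc.comp (((measurePreserving_midpoint_sub μ).prod (.id ν)).comp
    (assoc.symm MeasurableEquiv.prodAssoc))

theorem map_smul_toSphere_prod_volumeIoiPow [FiniteDimensional ℝ E] [Nontrivial E]
    (μ : Measure E) [μ.IsAddHaarMeasure] :
    (μ.toSphere.prod (Measure.volumeIoiPow (Module.finrank ℝ E - 1))).map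
      (fun z : sphere (0 : E) 1 × Set.Ioi (0 : ℝ) => (z.2 : ℝ) • (z.1 : E)) = μ := by
  have hval : (μ.comap ((↑) : ({0}ᶜ : Set E) → E)).map (↑) = μ := by
    rw [(MeasurableEmbedding.subtype_coe (measurableSet_singleton 0).compl).map_comap,
      Subtype.range_coe, restrict_compl_singleton]
  rwa [← (μ.measurePreserving_homeomorphUnitSphereProd.symm
    (homeomorphUnitSphereProd E).toMeasurableEquiv).map_eq, Measure.map_map
    measurable_subtype_coe (MeasurableEquiv.measurable _)] at hval

/-- The exchange `(q, σ) ↦ (|q| σ, q / |q|)` of pre- and post-collisional relative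
velocities. -/
def polarSwap (z : E × sphere (0 : E) 1) : E × E := (‖z.1‖ • (z.2 : E), ‖z.1‖⁻¹ • z.1)

@[fun_prop]
theorem measurable_polarSwap [SecondCountableTopology E] :
    Measurable (polarSwap (E := E)) := by
  unfold polarSwap; fun_prop

theorem map_polarSwap_prod_toSphere [FiniteDimensional ℝ E] [Nontrivial E]
    (μ : Measure E) [μ.IsAddHaarMeasure] :
    (μ.prod μ.toSphere).map polarSwap = (μ.prod μ.toSphere).map (Prod.map id (↑)) := by
  set ρ := Measure.volumeIoiPow (Module.finrank ℝ E - 1)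
  set polar := fun z : sphere (0 : E) 1 × Set.Ioi (0 : ℝ) => (z.2 : ℝ) • (z.1 : E)
  have hpolar : Measurable polar := by fun_prop
  have hdecomp :
      μ.prod μ.toSphere = ((μ.toSphere.prod ρ).prod μ.toSphere).map (Prod.map polar id) := by
    rw [← Measure.map_prod_map _ _ hpolar measurable_id, map_smul_toSphere_prod_volumeIoiPow,
      Measure.map_id]
  set swapSpheres := fun z : (sphere (0 : E) 1 × Set.Ioi (0 : ℝ)) × sphere (0 : E) 1 =>
    ((z.2, z.1.2), z.1.1)
  have hswap : MeasurePreserving swapSpheres ((μ.toSphere.prod ρ).prod μ.toSphere)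
      ((μ.toSphere.prod ρ).prod μ.toSphere) :=
    ((Measure.measurePreserving_swap (μ := ρ) (ν := μ.toSphere)).prod (.id _)).comp
      (Measure.measurePreserving_swap.comp (measurePreserving_prodAssoc _ _ _))
  have hpointwise : polarSwap ∘ Prod.map polar id =
      (Prod.map id (↑) ∘ Prod.map polar id) ∘ swapSpheres := by
    ext ⟨⟨ω, r, hr⟩, σ⟩ : 1
    have hr : (0 : ℝ) < r := hr
    have hnorm : ‖r • (ω : E)‖ = r := by
      rw [norm_smul, norm_eq_of_mem_sphere, mul_one, Real.norm_of_nonneg hr.le]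
    simp [polarSwap, polar, swapSpheres, hnorm, smul_smul, inv_mul_cancel₀ hr.ne']
  rw [hdecomp, Measure.map_map (by fun_prop) (by fun_prop),
    Measure.map_map (by fun_prop) (by fun_prop), hpointwise,
    ← Measure.map_map (by fun_prop) hswap.measurable, hswap.map_eq]

end ChangeOfVariables

section MapIntegral

variable {α β G : Type*} [MeasurableSpace α] [MeasurableSpace β] [NormedAddCommGroup G]
  {μ : Measure α} {φ ψ : α → β} {g : β → G}

theorem integrable_comp_iff_of_map_eq (hφ : AEMeasurable φ μ) (hψ : AEMeasurable ψ μ)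
    (h : μ.map φ = μ.map ψ) (hg : AEStronglyMeasurable g (μ.map ψ)) :
    Integrable (g ∘ φ) μ ↔ Integrable (g ∘ ψ) μ := by
  rw [← integrable_map_measure (h ▸ hg) hφ, h, integrable_map_measure hg hψ]

theorem integral_comp_eq_of_map_eq [NormedSpace ℝ G] (hφ : AEMeasurable φ μ) (hψ : AEMeasurable ψ μ)
    (h : μ.map φ = μ.map ψ) (hg : AEStronglyMeasurable g (μ.map ψ)) :
    ∫ x, (g ∘ φ) x ∂μ = ∫ x, (g ∘ ψ) x ∂μ := by
  simp only [Function.comp_apply]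
  rw [← integral_map hφ (h ▸ hg), h, integral_map hψ hg]

end MapIntegral

section Collision

variable {d : ℕ}

/-- The collision integrand in the variables `(m, q, ω)`: centre of mass `m = (v + v_*)/2`,
relative velocity `q = v - v_*`, and `ω` in the place of `σ`. -/
def cmIntegrand (B : ℝ → ℝ → ℝ) (f : Vel d → ℝ) (p : Vel d × Vel d × Vel d) : ℝ :=
  B (⟪p.2.2, p.2.1⟫_ℝ / ‖p.2.1‖) ‖p.2.1‖ *
    (f (p.1 - (2 : ℝ)⁻¹ • p.2.1) * f (p.1 + (2 : ℝ)⁻¹ • p.2.1))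

theorem measurable_cmIntegrand {B : ℝ → ℝ → ℝ} (hB : Measurable (Function.uncurry B))
    {f : Vel d → ℝ} (hf : Measurable f) : Measurable (cmIntegrand B f) := by
  have hargs : Measurable fun p : Vel d × Vel d × Vel d =>
      (⟪p.2.2, p.2.1⟫_ℝ / ‖p.2.1‖, ‖p.2.1‖) := by
    fun_prop
  exact (hB.comp hargs).mul (by fun_prop)

def gainIntegrand (B : ℝ → ℝ → ℝ) (f : Vel d → ℝ)
    (p : Vel d × Vel d × sphere (0 : Vel d) 1) : ℝ :=
  B (⟪(p.2.2 : Vel d), p.1 - p.2.1⟫_ℝ / ‖p.1 - p.2.1‖) ‖p.1 - p.2.1‖ *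
    (f ((2 : ℝ)⁻¹ • (p.1 + p.2.1) - (‖p.1 - p.2.1‖ / 2) • (p.2.2 : Vel d)) *
      f ((2 : ℝ)⁻¹ • (p.1 + p.2.1) + (‖p.1 - p.2.1‖ / 2) • (p.2.2 : Vel d)))

def lossIntegrand (B : ℝ → ℝ → ℝ) (f : Vel d → ℝ)
    (p : Vel d × Vel d × sphere (0 : Vel d) 1) : ℝ :=
  B (⟪(p.2.2 : Vel d), p.1 - p.2.1⟫_ℝ / ‖p.1 - p.2.1‖) ‖p.1 - p.2.1‖ * (f p.2.1 * f p.1)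

def toCentreOfMass (p : Vel d × Vel d × sphere (0 : Vel d) 1) :
    Vel d × Vel d × sphere (0 : Vel d) 1 :=
  ((2 : ℝ)⁻¹ • (p.1 + p.2.1), p.1 - p.2.1, p.2.2)

@[fun_prop]
theorem measurable_toCentreOfMass : Measurable (toCentreOfMass (d := d)) := by
  unfold toCentreOfMass; fun_prop

theorem measurePreserving_toCentreOfMass :
    MeasurePreserving toCentreOfMass (volume.prod (volume.prod (sphereMeasure d)))
      (volume.prod (volume.prod (sphereMeasure d))) :=
  measurePreserving_midpoint_sub_prod volume (sphereMeasure d)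

theorem map_polarSwap_comp_toCentreOfMass [Nonempty (Fin d)] :
    (volume.prod (volume.prod (sphereMeasure d))).map
        (Prod.map id polarSwap ∘ toCentreOfMass) =
      (volume.prod (volume.prod (sphereMeasure d))).map
        (Prod.map id (Prod.map id (↑)) ∘ toCentreOfMass) := by
  rw [← Measure.map_map (by fun_prop) measurable_toCentreOfMass,
    ← Measure.map_map (by fun_prop) measurable_toCentreOfMass,
    measurePreserving_toCentreOfMass.map_eq,
    ← Measure.map_prod_map _ _ measurable_id (by fun_prop),
    ← Measure.map_prod_map _ _ measurable_id (by fun_prop)]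
  exact congrArg _ (map_polarSwap_prod_toSphere volume)

theorem lossIntegrand_eq_comp (B : ℝ → ℝ → ℝ) (f : Vel d → ℝ) :
    lossIntegrand B f = cmIntegrand B f ∘ Prod.map id (Prod.map id (↑)) ∘ toCentreOfMass := by
  ext ⟨v, vs, σ⟩
  simp only [lossIntegrand, cmIntegrand, toCentreOfMass, Function.comp_apply, Prod.map_apply,
    id_eq]
  congr 3 <;> module

theorem gainIntegrand_eq_comp (B : ℝ → ℝ → ℝ) (f : Vel d → ℝ) :
    gainIntegrand B f = cmIntegrand B f ∘ Prod.map id polarSwap ∘ toCentreOfMass := by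
  ext ⟨v, vs, σ⟩
  have hnorm : ‖‖v - vs‖ • (σ : Vel d)‖ = ‖v - vs‖ := by
    rw [norm_smul, norm_eq_of_mem_sphere, mul_one, norm_norm]
  have hcos : ⟪‖v - vs‖⁻¹ • (v - vs), ‖v - vs‖ • (σ : Vel d)⟫_ℝ / ‖v - vs‖ =
      ⟪(σ : Vel d), v - vs⟫_ℝ / ‖v - vs‖ := by
    rcases eq_or_ne ‖v - vs‖ 0 with h0 | h0
    · simp [h0]
    · rw [real_inner_smul_left, real_inner_smul_right, real_inner_comm,
        inv_mul_cancel_left₀ h0]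
  simp only [gainIntegrand, cmIntegrand, toCentreOfMass, polarSwap, Function.comp_apply,
    Prod.map_apply, id_eq, hnorm, hcos, smul_smul, div_eq_inv_mul]

end Collision

theorem collOp_conserves_mass_general
    (d : ℕ) (hd : 2 ≤ d) (B : ℝ → ℝ → ℝ) (hBmeas : Measurable (Function.uncurry B))
    (f : Vel d → ℝ) (hfmeas : Measurable f)
    (hint : Integrable
      (fun p : Vel d × Vel d × sphere (0 : Vel d) 1 =>
        B (⟪(p.2.2 : Vel d), p.1 - p.2.1⟫_ℝ / ‖p.1 - p.2.1‖) ‖p.1 - p.2.1‖ *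
          f p.1 * f p.2.1)
      ((volume : Measure (Vel d)).prod
        (((volume : Measure (Vel d))).prod (sphereMeasure d)))) :
    ∫ v : Vel d, collOp d B f f v = 0 := by
  have : Nonempty (Fin d) := ⟨⟨0, by omega⟩⟩
  set P := (volume : Measure (Vel d)).prod ((volume : Measure (Vel d)).prod (sphereMeasure d))
  have hK := measurable_cmIntegrand hBmeas hfmeas
  have hmap := map_polarSwap_comp_toCentreOfMass (d := d)
  have hloss : Integrable (lossIntegrand B f) P := hint.congr (.of_forall fun p => by
    simp only [lossIntegrand]; ring)
  have hgain : Integrable (gainIntegrand B f) P := by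
    rwa [gainIntegrand_eq_comp, integrable_comp_iff_of_map_eq (by fun_prop) (by fun_prop) hmap
      hK.aestronglyMeasurable, ← lossIntegrand_eq_comp]
  have hbalance : ∫ p, gainIntegrand B f p ∂P = ∫ p, lossIntegrand B f p ∂P := by
    rw [gainIntegrand_eq_comp, lossIntegrand_eq_comp]
    exact integral_comp_eq_of_map_eq (by fun_prop) (by fun_prop) hmap hK.aestronglyMeasurable
  have hcollOp : ∀ᵐ v ∂(volume : Measure (Vel d)),
      collOp d B f f v = ∫ y, (gainIntegrand B f - lossIntegrand B f) (v, y)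
        ∂(volume.prod (sphereMeasure d)) := by
    filter_upwards [(hgain.sub hloss).prod_right_ae] with v hv
    rw [integral_prod _ hv]
    simp only [collOp, gainIntegrand, lossIntegrand, Pi.sub_apply, mul_sub]
  calc ∫ v, collOp d B f f v
      = ∫ p, (gainIntegrand B f - lossIntegrand B f) p ∂P := by
        rw [integral_congr_ae hcollOp, integral_prod _ (hgain.sub hloss)]
    _ = 0 := by rw [Pi.sub_def, integral_sub hgain hloss, hbalance, sub_self]

/-- Conservation of mass by the Boltzmann collision operator:
`∫ Q(f,f)(v) dv = 0`. -/
theorem collOp_conserves_mass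
    (d : ℕ) (hd : 2 ≤ d) (B : ℝ → ℝ → ℝ) (hBmeas : Measurable (Function.uncurry B))
    (hBpos : ∀ x y, 0 ≤ B x y)
    (f : Vel d → ℝ) (hfmeas : Measurable f) (hfpos : ∀ v, 0 ≤ f v)
    (hint : Integrable
      (fun p : Vel d × Vel d × sphere (0 : Vel d) 1 =>
        B (⟪(p.2.2 : Vel d), p.1 - p.2.1⟫_ℝ / ‖p.1 - p.2.1‖) ‖p.1 - p.2.1‖ *
          f p.1 * f p.2.1)
      ((volume : Measure (Vel d)).prod
        (((volume : Measure (Vel d))).prod (sphereMeasure d)))) :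
    ∫ v : Vel d, collOp d B f f v = 0 :=
  collOp_conserves_mass_general d hd B hBmeas f hfmeas hint
end
end

section
/- Let d ≥ 2, let B be a nonnegative measurable collision kernel, and let f : ℝ^d → [0,∞) be measurable. Assume that the function (v, v_*, σ) ↦ B(cos θ, |v−v_*|) f(v) f(v_*) (1 + |v|² + |v_*|²) is integrable on ℝ^d × ℝ^d × S^{d−1}. Then the collision operator conserves kinetic energy: ∫_{ℝ^d} |v|² · Q(f,f)(v) dv = 0. -/
open MeasureTheory Metric Real
open scoped InnerProductSpace

noncomputable section

/-! The gain integrand of `Q(f,f)` is the loss integrand `L = B f(v_*) f(v)` composed with the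
pre-post collisional change of variables `T (v, v_*, σ) = (v', v'_*, (v - v_*)/|v - v_*|)`.
`T` preserves `dv dv_* dσ`: it is the centre-of-mass change `(v, v_*) ↦ ((v + v_*)/2, v - v_*)`,
followed by the exchange `(r ω, σ) ↦ (r σ, ω)` of the direction of the relative velocity with `σ`
(in polar coordinates `μ = μ.toSphere ⊗ r^(d-1) dr` this only permutes factors), followed by the
inverse centre-of-mass change. Hence `∫ |v|² (L ∘ T) = ∫ |v'|² L`. The swap
`(v, v_*, σ) ↦ (v_*, v, -σ)` preserves the measure and `L` and exchanges `v'` with `v'_*`, so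
`∫ |v'|² L = ½ ∫ (|v'|² + |v'_*|²) L = ½ ∫ (|v|² + |v_*|²) L = ∫ |v|² L`, by conservation of
energy in each collision. -/

open Set Function

namespace MeasureTheory

theorem measurePreserving_prod_add_comp {α G : Type*} [MeasurableSpace α] [AddGroup G]
    [MeasurableSpace G] [MeasurableAdd₂ G] (μ : Measure α) (ν : Measure G) [SFinite μ]
    [SFinite ν] [ν.IsAddRightInvariant] {g : α → G} (hg : Measurable g) :
    MeasurePreserving (fun z : α × G => (z.1, z.2 + g z.1)) (μ.prod ν) (μ.prod ν) :=
  (MeasurePreserving.id μ).skew_product (measurable_snd.add (hg.comp measurable_fst))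
    (.of_forall fun x => map_add_right_eq_self ν (g x))

section Prod

variable {α β γ : Type*} [MeasurableSpace α] [MeasurableSpace β] [MeasurableSpace γ]
  {μ : Measure α} {ν : Measure β} [SFinite μ] [SFinite ν]

theorem MeasurePreserving.prod_id_assoc {f : α × β → α × β}
    (hf : MeasurePreserving f (μ.prod ν) (μ.prod ν)) (ρ : Measure γ) [SFinite ρ] :
    MeasurePreserving (fun p : α × β × γ => ((f (p.1, p.2.1)).1, (f (p.1, p.2.1)).2, p.2.2))
      (μ.prod (ν.prod ρ)) (μ.prod (ν.prod ρ)) :=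
  (measurePreserving_prodAssoc μ ν ρ).comp <| (hf.prod (.id ρ)).comp <|
    (measurePreserving_prodAssoc μ ν ρ).symm MeasurableEquiv.prodAssoc

variable (μ ν) in
theorem measurePreserving_prod_exchange :
    MeasurePreserving (fun z : (α × β) × α => ((z.2, z.1.2), z.1.1))
      ((μ.prod ν).prod μ) ((μ.prod ν).prod μ) :=
  ((measurePreserving_prodAssoc μ ν μ).symm MeasurableEquiv.prodAssoc).comp <|
    ((MeasurePreserving.id μ).prod Measure.measurePreserving_swap).comp
      Measure.measurePreserving_swap

theorem integral_mul_integral_integral_eq_integral_prod {ρ : Measure γ} [SFinite ρ]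
    {ψ : α → ℝ} {W : α × β × γ → ℝ} (hW : Integrable (fun p => ψ p.1 * W p) (μ.prod (ν.prod ρ))) :
    ∫ x, ψ x * ∫ y, ∫ z, W (x, y, z) ∂ρ ∂ν ∂μ = ∫ p, ψ p.1 * W p ∂(μ.prod (ν.prod ρ)) := by
  rw [integral_prod _ hW]
  refine integral_congr_ae ?_
  filter_upwards [hW.prod_right_ae] with x hx
  rcases eq_or_ne (ψ x) 0 with hψ | hψ
  · simp [hψ]
  · rw [integral_const_mul, integral_prod _ ((integrable_const_mul_iff hψ.isUnit _).1 hx)]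

end Prod

theorem MeasurePreserving.integral_comp_of_aestronglyMeasurable {α β G : Type*}
    [MeasurableSpace α] [MeasurableSpace β] [NormedAddCommGroup G] [NormedSpace ℝ G]
    {μ : Measure α} {ν : Measure β} {f : α → β} (hf : MeasurePreserving f μ ν) {g : β → G}
    (hg : AEStronglyMeasurable g ν) : ∫ x, g (f x) ∂μ = ∫ y, g y ∂ν := by
  rw [← hf.map_eq] at hg ⊢
  exact (integral_map hf.aemeasurable hg).symm

end MeasureTheory

section Direction

variable {E : Type*} [NormedAddCommGroup E] [NormedSpace ℝ E]

open Classical in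
def dirOr (q : E) (σ : sphere (0 : E) 1) : sphere (0 : E) 1 :=
  ⟨if q = 0 then σ else ‖q‖⁻¹ • q, by split_ifs with hq <;> simp [norm_smul, hq]⟩

theorem coe_dirOr_of_ne {q : E} (σ : sphere (0 : E) 1) (hq : q ≠ 0) :
    (dirOr q σ : E) = ‖q‖⁻¹ • q := by
  simp [dirOr, hq]

theorem norm_smul_dirOr (q : E) (σ : sphere (0 : E) 1) : ‖q‖ • (dirOr q σ : E) = q := by
  rcases eq_or_ne q 0 with rfl | hq
  · simp
  · rw [coe_dirOr_of_ne σ hq, smul_inv_smul₀ (norm_ne_zero_iff.2 hq)]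

theorem measurable_dirOr [MeasurableSpace E] [BorelSpace E] :
    Measurable fun z : E × sphere (0 : E) 1 => dirOr z.1 z.2 := by
  classical
  exact .subtype_mk <| .ite (measurable_fst (measurableSet_singleton 0))
    (measurable_subtype_coe.comp measurable_snd) (measurable_fst.norm.inv.smul measurable_fst)

def exchangeDir (z : E × sphere (0 : E) 1) : E × sphere (0 : E) 1 :=
  (‖z.1‖ • (z.2 : E), dirOr z.1 z.2)

theorem exchangeDir_smul {r : ℝ} (hr : 0 < r) (ω σ : sphere (0 : E) 1) :
    exchangeDir (r • (ω : E), σ) = (r • (σ : E), ω) := by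
  have hω : ‖(ω : E)‖ = 1 := norm_eq_of_mem_sphere ω
  have hrω : r • (ω : E) ≠ 0 := smul_ne_zero hr.ne' (by simp [← norm_ne_zero_iff, hω])
  ext
  · simp [exchangeDir, norm_smul, hω, abs_of_pos hr]
  · simp [exchangeDir, coe_dirOr_of_ne _ hrω, norm_smul, hω, abs_of_pos hr, smul_smul, hr.ne']

theorem measurable_exchangeDir [MeasurableSpace E] [BorelSpace E] :
    Measurable (exchangeDir (E := E)) :=
  (measurable_fst.norm.smul (measurable_subtype_coe.comp measurable_snd)).prodMk measurable_dirOr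

end Direction

section HaarMeasure

variable {E : Type*} [NormedAddCommGroup E] [NormedSpace ℝ E] [MeasurableSpace E] [BorelSpace E]
  [FiniteDimensional ℝ E] (μ : Measure E) [μ.IsAddHaarMeasure]

theorem measurePreserving_half_add_sub :
    MeasurePreserving (fun z : E × E => ((2 : ℝ)⁻¹ • (z.1 + z.2), z.1 - z.2))
      (μ.prod μ) (μ.prod μ) := by
  convert Measure.measurePreserving_swap.comp <|
    (measurePreserving_prod_add_comp μ μ (measurable_const_smul (2 : ℝ)⁻¹)).comp <|
      measurePreserving_sub_prod μ μ using 1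
  ext z
  · simp only [comp_apply, Prod.fst_swap]
    module
  · rfl

theorem measurePreserving_add_half_sub_half :
    MeasurePreserving (fun z : E × E => (z.1 + (2 : ℝ)⁻¹ • z.2, z.1 - (2 : ℝ)⁻¹ • z.2))
      (μ.prod μ) (μ.prod μ) := by
  convert (measurePreserving_add_prod μ μ).comp <|
    (measurePreserving_prod_add_comp μ μ (measurable_const_smul (-(2 : ℝ)⁻¹))).comp
      Measure.measurePreserving_swap using 1
  ext z
  · simp only [comp_apply, Prod.fst_swap, Prod.snd_swap]
    module
  · simp only [comp_apply, Prod.fst_swap, Prod.snd_swap, neg_smul, sub_eq_add_neg]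

theorem map_smul_toSphere_prod_volumeIoiPow_s5 [Nontrivial E] :
    Measure.map (fun y : sphere (0 : E) 1 × Ioi (0 : ℝ) => (y.2 : ℝ) • (y.1 : E))
      (μ.toSphere.prod (Measure.volumeIoiPow (Module.finrank ℝ E - 1))) = μ := by
  let e := (homeomorphUnitSphereProd E).toMeasurableEquiv
  have he := (μ.measurePreserving_homeomorphUnitSphereProd.symm e).map_eq
  calc _ = Measure.map Subtype.val (Measure.map e.symm
          (μ.toSphere.prod (Measure.volumeIoiPow (Module.finrank ℝ E - 1)))) := by
        rw [Measure.map_map measurable_subtype_coe e.symm.measurable]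
        rfl
    _ = μ := by
        rw [he, map_comap_subtype_coe (measurableSet_singleton 0).compl,
          restrict_compl_singleton]

theorem measurePreserving_exchangeDir [Nontrivial E] :
    MeasurePreserving exchangeDir (μ.prod μ.toSphere) (μ.prod μ.toSphere) := by
  let polar : (sphere (0 : E) 1 × Ioi (0 : ℝ)) × sphere (0 : E) 1 → E × sphere (0 : E) 1 :=
    Prod.map (fun y => (y.2 : ℝ) • (y.1 : E)) id
  have hpolar_meas : Measurable polar := by fun_prop
  have hpolar : Measure.map polar
      ((μ.toSphere.prod (Measure.volumeIoiPow (Module.finrank ℝ E - 1))).prod μ.toSphere) =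
        μ.prod μ.toSphere := by
    rw [← Measure.map_prod_map _ _ (by fun_prop) measurable_id, Measure.map_id,
      map_smul_toSphere_prod_volumeIoiPow_s5]
  have hcomm : exchangeDir ∘ polar = polar ∘ fun z => ((z.2, z.1.2), z.1.1) :=
    funext fun z => exchangeDir_smul z.1.2.2 z.1.1 z.2
  refine ⟨measurable_exchangeDir, ?_⟩
  rw [← hpolar, Measure.map_map measurable_exchangeDir hpolar_meas, hcomm,
    ← Measure.map_map hpolar_meas (by fun_prop),
    (measurePreserving_prod_exchange μ.toSphere _).map_eq]

open scoped Pointwise in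
theorem measurePreserving_neg_toSphere :
    MeasurePreserving (fun σ : sphere (0 : E) 1 => -σ) μ.toSphere μ.toSphere := by
  refine ⟨continuous_neg.measurable, Measure.ext fun s hs => ?_⟩
  have hval : ((↑) : sphere (0 : E) 1 → E) '' ((fun σ => -σ) ⁻¹' s) = -((↑) '' s) := by
    ext x
    constructor
    · rintro ⟨σ, hσ, rfl⟩
      exact ⟨-σ, hσ, by simp⟩
    · rintro ⟨τ, hτ, hx⟩
      exact ⟨-τ, by simpa using hτ, by simp [hx]⟩
  rw [Measure.map_apply continuous_neg.measurable hs, μ.toSphere_apply' hs,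
    μ.toSphere_apply' (continuous_neg.measurable hs), hval, Set.smul_neg, Measure.measure_neg]

end HaarMeasure

section Collision

variable {E : Type*} [NormedAddCommGroup E]

def particleSwap (p : E × E × sphere (0 : E) 1) : E × E × sphere (0 : E) 1 :=
  (p.2.1, p.1, -p.2.2)

@[simp]
theorem particleSwap_fst (p : E × E × sphere (0 : E) 1) : (particleSwap p).1 = p.2.1 := rfl

variable [NormedSpace ℝ E]

def postVel (p : E × E × sphere (0 : E) 1) : E :=
  (2 : ℝ)⁻¹ • (p.1 + p.2.1) + (‖p.1 - p.2.1‖ / 2) • (p.2.2 : E)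

def postVelStar (p : E × E × sphere (0 : E) 1) : E :=
  (2 : ℝ)⁻¹ • (p.1 + p.2.1) - (‖p.1 - p.2.1‖ / 2) • (p.2.2 : E)

def collisionMap (p : E × E × sphere (0 : E) 1) : E × E × sphere (0 : E) 1 :=
  (postVel p, postVelStar p, dirOr (p.1 - p.2.1) p.2.2)

def IsCollisionInvariant (ψ : E → ℝ) : Prop :=
  ∀ p, ψ (postVel p) + ψ (postVelStar p) = ψ p.1 + ψ p.2.1

theorem continuous_postVel : Continuous (postVel (E := E)) := by
  unfold postVel
  fun_prop

theorem postVel_add_postVelStar (p : E × E × sphere (0 : E) 1) :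
    postVel p + postVelStar p = p.1 + p.2.1 := by
  unfold postVel postVelStar
  module

theorem postVel_sub_postVelStar (p : E × E × sphere (0 : E) 1) :
    postVel p - postVelStar p = ‖p.1 - p.2.1‖ • (p.2.2 : E) := by
  unfold postVel postVelStar
  module

theorem norm_postVel_sub_postVelStar (p : E × E × sphere (0 : E) 1) :
    ‖postVel p - postVelStar p‖ = ‖p.1 - p.2.1‖ := by
  simp [postVel_sub_postVelStar, norm_smul]

theorem postVel_collisionMap (p : E × E × sphere (0 : E) 1) : postVel (collisionMap p) = p.1 := by
  have h := norm_smul_dirOr (p.1 - p.2.1) p.2.2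
  rw [postVel, collisionMap, postVel_add_postVelStar, norm_postVel_sub_postVelStar, div_eq_inv_mul,
    mul_smul, h]
  module

theorem postVel_particleSwap (p : E × E × sphere (0 : E) 1) :
    postVel (particleSwap p) = postVelStar p := by
  simp only [postVel, postVelStar, particleSwap, norm_sub_rev p.2.1, coe_neg_sphere]
  module

variable [MeasurableSpace E] [BorelSpace E] [FiniteDimensional ℝ E] (μ : Measure E)
  [μ.IsAddHaarMeasure]

theorem measurePreserving_particleSwap :
    MeasurePreserving particleSwap (μ.prod (μ.prod μ.toSphere)) (μ.prod (μ.prod μ.toSphere)) :=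
  (measurePreserving_prodAssoc μ μ μ.toSphere).comp <|
    (Measure.measurePreserving_swap.prod (measurePreserving_neg_toSphere μ)).comp <|
      (measurePreserving_prodAssoc μ μ μ.toSphere).symm MeasurableEquiv.prodAssoc

theorem measurePreserving_collisionMap [Nontrivial E] :
    MeasurePreserving collisionMap (μ.prod (μ.prod μ.toSphere)) (μ.prod (μ.prod μ.toSphere)) := by
  convert ((measurePreserving_add_half_sub_half μ).prod_id_assoc μ.toSphere).comp <|
    ((MeasurePreserving.id μ).prod (measurePreserving_exchangeDir μ)).comp <|
      (measurePreserving_half_add_sub μ).prod_id_assoc μ.toSphere using 1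
  funext p
  simp only [collisionMap, postVel, postVelStar, exchangeDir, comp_apply, Prod.map_apply, id,
    smul_smul, inv_mul_eq_div]

end Collision

section WeakForm

variable {E : Type*} [NormedAddCommGroup E] [NormedSpace ℝ E] [MeasurableSpace E] [BorelSpace E]
  [FiniteDimensional ℝ E] (μ : Measure E) [μ.IsAddHaarMeasure]
  {ψ : E → ℝ} {L : E × E × sphere (0 : E) 1 → ℝ}

theorem integrable_comp_particleSwap_mul {g : E × E × sphere (0 : E) 1 → ℝ}
    (hL : ∀ p, L (particleSwap p) = L p)
    (hint : Integrable (fun p => g p * L p) (μ.prod (μ.prod μ.toSphere))) :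
    Integrable (fun p => g (particleSwap p) * L p) (μ.prod (μ.prod μ.toSphere)) := by
  refine ((measurePreserving_particleSwap μ).integrable_comp_of_integrable hint).congr
    (.of_forall fun p => ?_)
  simp only [comp_apply, hL]

theorem integrable_comp_postVel_mul (hψm : Measurable ψ) (hψ0 : ∀ v, 0 ≤ ψ v)
    (hψ : IsCollisionInvariant ψ) (hLm : Measurable L) (hL : ∀ p, L (particleSwap p) = L p)
    (hint : Integrable (fun p => ψ p.1 * L p) (μ.prod (μ.prod μ.toSphere))) :
    Integrable (fun p => ψ (postVel p) * L p) (μ.prod (μ.prod μ.toSphere)) := by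
  refine (hint.add (integrable_comp_particleSwap_mul μ (g := fun p => ψ p.1) hL hint)).mono
    ((hψm.comp continuous_postVel.measurable).mul hLm).aestronglyMeasurable
    (.of_forall fun p => ?_)
  calc ‖ψ (postVel p) * L p‖ = ψ (postVel p) * ‖L p‖ := by
        rw [norm_mul, Real.norm_of_nonneg (hψ0 _)]
    _ ≤ (ψ p.1 + ψ p.2.1) * ‖L p‖ := by
        gcongr
        linarith [hψ p, hψ0 (postVelStar p)]
    _ = ‖ψ p.1 * L p + ψ p.2.1 * L p‖ := by
        rw [← add_mul, norm_mul, Real.norm_of_nonneg (add_nonneg (hψ0 _) (hψ0 _))]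

variable [Nontrivial E]

theorem integrable_mul_comp_collisionMap (hψm : Measurable ψ) (hψ0 : ∀ v, 0 ≤ ψ v)
    (hψ : IsCollisionInvariant ψ) (hLm : Measurable L) (hL : ∀ p, L (particleSwap p) = L p)
    (hint : Integrable (fun p => ψ p.1 * L p) (μ.prod (μ.prod μ.toSphere))) :
    Integrable (fun p => ψ p.1 * L (collisionMap p)) (μ.prod (μ.prod μ.toSphere)) := by
  simpa only [comp_def, postVel_collisionMap] using
    (measurePreserving_collisionMap μ).integrable_comp_of_integrable
      (integrable_comp_postVel_mul μ hψm hψ0 hψ hLm hL hint)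

theorem integral_mul_comp_collisionMap (hψm : Measurable ψ) (hψ0 : ∀ v, 0 ≤ ψ v)
    (hψ : IsCollisionInvariant ψ) (hLm : Measurable L) (hL : ∀ p, L (particleSwap p) = L p)
    (hint : Integrable (fun p => ψ p.1 * L p) (μ.prod (μ.prod μ.toSphere))) :
    ∫ p, ψ p.1 * L (collisionMap p) ∂(μ.prod (μ.prod μ.toSphere)) =
      ∫ p, ψ p.1 * L p ∂(μ.prod (μ.prod μ.toSphere)) := by
  have hS := measurePreserving_particleSwap μ
  have hpost := integrable_comp_postVel_mul μ hψm hψ0 hψ hLm hL hint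
  have hpostStar : Integrable (fun p => ψ (postVelStar p) * L p) (μ.prod (μ.prod μ.toSphere)) := by
    simpa only [postVel_particleSwap] using integrable_comp_particleSwap_mul μ hL hpost
  have hsnd : Integrable (fun p => ψ p.2.1 * L p) (μ.prod (μ.prod μ.toSphere)) :=
    integrable_comp_particleSwap_mul μ (g := fun p => ψ p.1) hL hint
  have hmeas {u : E × E × sphere (0 : E) 1 → E} (hu : Measurable u) :
      AEStronglyMeasurable (fun p => ψ (u p) * L p) (μ.prod (μ.prod μ.toSphere)) :=
    ((hψm.comp hu).mul hLm).aestronglyMeasurable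
  have hgain_eq : ∫ p, ψ p.1 * L (collisionMap p) ∂(μ.prod (μ.prod μ.toSphere)) =
      ∫ p, ψ (postVel p) * L p ∂(μ.prod (μ.prod μ.toSphere)) := by
    simpa only [postVel_collisionMap] using
      (measurePreserving_collisionMap μ).integral_comp_of_aestronglyMeasurable
        (hmeas continuous_postVel.measurable)
  have hpostStar_eq : ∫ p, ψ (postVelStar p) * L p ∂(μ.prod (μ.prod μ.toSphere)) =
      ∫ p, ψ (postVel p) * L p ∂(μ.prod (μ.prod μ.toSphere)) := by
    simpa only [postVel_particleSwap, hL] using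
      hS.integral_comp_of_aestronglyMeasurable (hmeas continuous_postVel.measurable)
  have hsnd_eq : ∫ p, ψ p.2.1 * L p ∂(μ.prod (μ.prod μ.toSphere)) =
      ∫ p, ψ p.1 * L p ∂(μ.prod (μ.prod μ.toSphere)) := by
    simpa only [particleSwap_fst, hL] using
      hS.integral_comp_of_aestronglyMeasurable (hmeas measurable_fst)
  have henergy : ∫ p, ψ (postVel p) * L p ∂(μ.prod (μ.prod μ.toSphere)) +
      ∫ p, ψ (postVelStar p) * L p ∂(μ.prod (μ.prod μ.toSphere)) =
      ∫ p, ψ p.1 * L p ∂(μ.prod (μ.prod μ.toSphere)) +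
        ∫ p, ψ p.2.1 * L p ∂(μ.prod (μ.prod μ.toSphere)) := by
    rw [← integral_add hpost hpostStar, ← integral_add hint hsnd]
    simp only [← add_mul, hψ _]
  linarith

end WeakForm

section Kernel

variable {E : Type*} [NormedAddCommGroup E] [InnerProductSpace ℝ E]

def collKernel (B : ℝ → ℝ → ℝ) (p : E × E × sphere (0 : E) 1) : ℝ :=
  B (⟪(p.2.2 : E), p.1 - p.2.1⟫_ℝ / ‖p.1 - p.2.1‖) ‖p.1 - p.2.1‖

def collLoss (B : ℝ → ℝ → ℝ) (f g : E → ℝ) (p : E × E × sphere (0 : E) 1) : ℝ :=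
  collKernel B p * (f p.2.1 * g p.1)

variable {B : ℝ → ℝ → ℝ}

/-- No case split at `v = v_*` is needed: there both sides are `B 0 0`, as `x / 0 = 0`. -/
theorem collKernel_collisionMap (p : E × E × sphere (0 : E) 1) :
    collKernel B (collisionMap p) = collKernel B p := by
  have h := norm_smul_dirOr (p.1 - p.2.1) p.2.2
  rw [collKernel, collKernel, collisionMap, postVel_sub_postVelStar, real_inner_smul_right,
    ← real_inner_smul_left, h, real_inner_comm, norm_smul, norm_norm, norm_eq_of_mem_sphere p.2.2,
    mul_one]

theorem collKernel_particleSwap (p : E × E × sphere (0 : E) 1) :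
    collKernel B (particleSwap p) = collKernel B p := by
  simp only [collKernel, particleSwap, coe_neg_sphere, ← neg_sub p.1, inner_neg_neg, norm_neg]

theorem collLoss_particleSwap (f : E → ℝ) (p : E × E × sphere (0 : E) 1) :
    collLoss B f f (particleSwap p) = collLoss B f f p := by
  rw [collLoss, collLoss, collKernel_particleSwap, particleSwap_fst, mul_comm (f p.2.1)]
  rfl

theorem isCollisionInvariant_norm_sq : IsCollisionInvariant fun v : E => ‖v‖ ^ 2 := fun p => by
  have h₁ := parallelogram_law_with_norm ℝ (postVel p) (postVelStar p)
  have h₂ := parallelogram_law_with_norm ℝ p.1 p.2.1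
  rw [postVel_add_postVelStar, norm_postVel_sub_postVelStar] at h₁
  nlinarith

variable [MeasurableSpace E] [BorelSpace E] [SecondCountableTopology E] {f : E → ℝ}

theorem measurable_collKernel (hB : Measurable (uncurry B)) :
    Measurable (collKernel (E := E) B) := by
  have hq : Measurable fun p : E × E × sphere (0 : E) 1 => p.1 - p.2.1 := by fun_prop
  exact hB.comp <| (((measurable_subtype_coe.comp (by fun_prop)).inner hq).div hq.norm).prodMk
    hq.norm

theorem measurable_collLoss (hB : Measurable (uncurry B)) (hf : Measurable f) :
    Measurable (collLoss B f f) :=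
  (measurable_collKernel hB).mul ((hf.comp (by fun_prop)).mul (hf.comp measurable_fst))

theorem integrable_norm_sq_mul_collLoss {ν : Measure (E × E × sphere (0 : E) 1)}
    (hB : Measurable (uncurry B)) (hf : Measurable f)
    (hint : Integrable
      (fun p => collKernel B p * f p.1 * f p.2.1 * (1 + ‖p.1‖ ^ 2 + ‖p.2.1‖ ^ 2)) ν) :
    Integrable (fun p => ‖p.1‖ ^ 2 * collLoss B f f p) ν := by
  refine hint.mono (((continuous_fst.norm.pow 2).measurable.mul
    (measurable_collLoss hB hf)).aestronglyMeasurable) (.of_forall fun p => ?_)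
  have hw : 0 ≤ 1 + ‖p.1‖ ^ 2 + ‖p.2.1‖ ^ 2 := by positivity
  rw [collLoss, show collKernel B p * (f p.2.1 * f p.1) = collKernel B p * f p.1 * f p.2.1 by ring]
  generalize collKernel B p * f p.1 * f p.2.1 = K
  rw [norm_mul, norm_mul, Real.norm_of_nonneg (sq_nonneg _), Real.norm_of_nonneg hw]
  nlinarith [norm_nonneg K, sq_nonneg ‖p.2.1‖]

end Kernel

theorem collOp_eq_integral_collLoss_sub (d : ℕ) (B : ℝ → ℝ → ℝ) (f g : Vel d → ℝ) (v : Vel d) :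
    collOp d B f g v = ∫ vs, ∫ σ, collLoss B f g (collisionMap (v, vs, σ)) -
      collLoss B f g (v, vs, σ) ∂(volume : Measure (Vel d)).toSphere ∂volume := by
  simp only [collLoss, collKernel_collisionMap, ← mul_sub]
  rfl

theorem collOp_conserves_energy_general
    (d : ℕ) (B : ℝ → ℝ → ℝ) (hBmeas : Measurable (Function.uncurry B))
    (f : Vel d → ℝ) (hfmeas : Measurable f)
    (hint : Integrable
      (fun p : Vel d × Vel d × sphere (0 : Vel d) 1 =>
        B (⟪(p.2.2 : Vel d), p.1 - p.2.1⟫_ℝ / ‖p.1 - p.2.1‖) ‖p.1 - p.2.1‖ *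
          f p.1 * f p.2.1 * (1 + ‖p.1‖ ^ 2 + ‖p.2.1‖ ^ 2))
      ((volume : Measure (Vel d)).prod
        (((volume : Measure (Vel d))).prod (sphereMeasure d)))) :
    ∫ v : Vel d, ‖v‖ ^ 2 * collOp d B f f v = 0 := by
  rcases subsingleton_or_nontrivial (Vel d) with hd | hd
  · simp [Subsingleton.elim _ (0 : Vel d)]
  have hψm : Measurable fun v : Vel d => ‖v‖ ^ 2 := by fun_prop
  have hψ0 (v : Vel d) : 0 ≤ ‖v‖ ^ 2 := sq_nonneg _
  have hloss := integrable_norm_sq_mul_collLoss hBmeas hfmeas hint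
  have hgain := integrable_mul_comp_collisionMap volume hψm hψ0 isCollisionInvariant_norm_sq
    (measurable_collLoss hBmeas hfmeas) (collLoss_particleSwap f) hloss
  have hbalance := integral_mul_comp_collisionMap volume hψm hψ0 isCollisionInvariant_norm_sq
    (measurable_collLoss hBmeas hfmeas) (collLoss_particleSwap f) hloss
  simp_rw [collOp_eq_integral_collLoss_sub]
  refine (integral_mul_integral_integral_eq_integral_prod
    (W := fun p => collLoss B f f (collisionMap p) - collLoss B f f p)
    (by simpa only [mul_sub, Pi.sub_def] using hgain.sub hloss)).trans ?_
  simp only [mul_sub]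
  exact (integral_sub hgain hloss).trans (sub_eq_zero.2 hbalance)

/-- Conservation of kinetic energy by the Boltzmann collision operator:
`∫ |v|² Q(f,f)(v) dv = 0`. -/
theorem collOp_conserves_energy
    (d : ℕ) (hd : 2 ≤ d) (B : ℝ → ℝ → ℝ) (hBmeas : Measurable (Function.uncurry B))
    (hBpos : ∀ x y, 0 ≤ B x y)
    (f : Vel d → ℝ) (hfmeas : Measurable f) (hfpos : ∀ v, 0 ≤ f v)
    (hint : Integrable
      (fun p : Vel d × Vel d × sphere (0 : Vel d) 1 =>
        B (⟪(p.2.2 : Vel d), p.1 - p.2.1⟫_ℝ / ‖p.1 - p.2.1‖) ‖p.1 - p.2.1‖ *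
          f p.1 * f p.2.1 * (1 + ‖p.1‖ ^ 2 + ‖p.2.1‖ ^ 2))
      ((volume : Measure (Vel d)).prod
        (((volume : Measure (Vel d))).prod (sphereMeasure d)))) :
    ∫ v : Vel d, ‖v‖ ^ 2 * collOp d B f f v = 0 :=
  collOp_conserves_energy_general d B hBmeas f hfmeas hint
end
end
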